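/- arXiv:q-alg/9604016 — 6 statements merged into one kernel-verified Lean document; each statement's English description precedes it below -/
import Mathlib

section
/- If 0<q<1, b≠0, then for every complex z with z ≠ b^{-1}q^{-k} for all k ≥ 0, one has 1/(bz;q)_∞ = (1/(q;q)_∞) · Σ_{k=0}^∞ (-1)^k q^{k(k+1)/2} / ((q;q)_k (1 - z b q^k)). -/
/-!
Lagrange interpolation at the nodes `q⁻ᵏ`, `k < n`, gives the finite partial fraction expansion
`1 / (x;q)_n = ∑_{k<n} (-1)ᵏ q^(k(k+1)/2) / ((q;q)_k (q;q)_{n-1-k} (1 - x qᵏ))`,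
the node products `∏_{j ≠ k} (1 - q^(j-k))` being `(-1)ᵏ q^(-k(k+1)/2) (q;q)_k (q;q)_{n-1-k}`.
As `n → ∞`, `(q;q)_{n-1-k} → (q;q)_∞`; the finite Pochhammer symbols `(q;q)_m` and the factors
`1 - x qᵏ` are bounded away from `0`, so the terms are dominated by a multiple of `|q|ᵏ` and
Tannery's theorem lets one pass to the limit termwise.
-/

/-- The infinite q-Pochhammer symbol `(x;q)_∞ = ∏_{n≥0} (1 - x q^n)`. -/
noncomputable def qp (q x : ℂ) : ℂ := ∏' n : ℕ, (1 - x * q ^ n)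

/-- The finite q-Pochhammer symbol `(x;q)_k = ∏_{j<k} (1 - x q^j)`. -/
noncomputable def qpF (q x : ℂ) (k : ℕ) : ℂ := ∏ j ∈ Finset.range k, (1 - x * q ^ j)

open Finset Filter Topology Function

lemma ne_zero_of_injective_pow {M : Type*} [MonoidWithZero M] {a : M}
    (ha : Injective (a ^ · : ℕ → M)) : a ≠ 0 := fun h =>
  absurd (ha (show a ^ 1 = a ^ 2 by simp [h])) (by omega)

lemma pow_triangle_succ {M : Type*} [Monoid M] (a : M) (k : ℕ) :
    a ^ ((k + 1) * (k + 1 + 1) / 2) = a ^ (k * (k + 1) / 2) * a ^ (k + 1) := by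
  rw [← pow_add]
  congr 1
  have := Nat.triangle_succ (k + 1)
  simp only [Nat.add_sub_cancel] at this
  rw [mul_comm, this, mul_comm k]

lemma exists_pos_le_norm_of_tendsto {E : Type*} [NormedAddCommGroup E] {u : ℕ → E} {L : E}
    (hu : Tendsto u atTop (𝓝 L)) (hL : L ≠ 0) (hu0 : ∀ n, u n ≠ 0) :
    ∃ δ > 0, ∀ n, δ ≤ ‖u n‖ := by
  obtain ⟨y, hy, hmin⟩ := hu.isCompact_insert_range.exists_isMinOn (Set.insert_nonempty _ _)
    continuous_norm.continuousOn
  refine ⟨‖y‖, norm_pos_iff.mpr ?_, fun n => hmin (Set.mem_insert_of_mem _ ⟨n, rfl⟩)⟩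
  rcases hy with rfl | ⟨n, rfl⟩
  exacts [hL, hu0 n]

lemma tendsto_sum_range_of_dominated {G : Type*} [NormedAddCommGroup G] [CompleteSpace G]
    {f : ℕ → ℕ → G} {g : ℕ → G} {bound : ℕ → ℝ} (h_sum : Summable bound)
    (h_lim : ∀ k, Tendsto (f · k) atTop (𝓝 (g k))) (h_bound : ∀ n k, ‖f n k‖ ≤ bound k) :
    Tendsto (fun n => ∑ k ∈ range n, f n k) atTop (𝓝 (∑' k, g k)) := by
  have h_lim' (k : ℕ) : Tendsto (fun n => if k < n then f n k else 0) atTop (𝓝 (g k)) :=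
    (h_lim k).congr' <| (eventually_gt_atTop k).mono fun n hn => (if_pos hn).symm
  have h_bound' : ∀ n k, ‖if k < n then f n k else 0‖ ≤ bound k := fun n k => by
    split_ifs
    exacts [h_bound n k, norm_zero.trans_le ((norm_nonneg _).trans (h_bound n k))]
  refine (tendsto_tsum_of_dominated_convergence h_sum h_lim' (.of_forall h_bound')).congr
    fun n => ?_
  rw [tsum_eq_sum (s := range n) fun k hk => if_neg (by simpa using hk)]
  exact sum_congr rfl fun k hk => if_pos (mem_range.mp hk)

lemma eval_basisDivisor_inv_pow {K : Type*} [Field K] {a : K} (ha : Injective (a ^ · : ℕ → K))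
    (x : K) {j k : ℕ} (hjk : j ≠ k) :
    (Lagrange.basisDivisor (a ^ k)⁻¹ (a ^ j)⁻¹).eval x = (1 - x * a ^ j) / (1 - a ^ j / a ^ k) := by
  have hj : a ^ j ≠ 0 := pow_ne_zero j (ne_zero_of_injective_pow ha)
  have hk : a ^ k ≠ 0 := pow_ne_zero k (ne_zero_of_injective_pow ha)
  have hne : a ^ j - a ^ k ≠ 0 := sub_ne_zero.mpr (ha.ne hjk)
  have hne' : a ^ k - a ^ j ≠ 0 := sub_ne_zero.mpr (ha.ne hjk.symm)
  simp only [Lagrange.basisDivisor, Polynomial.eval_mul, Polynomial.eval_C, Polynomial.eval_sub,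
    Polynomial.eval_X]
  rw [inv_sub_inv hk hj, inv_div, one_sub_div hk, div_div_eq_mul_div]
  field_simp
  ring

section QPochhammer

variable {q : ℂ}

lemma qpF_succ (x : ℂ) (k : ℕ) : qpF q x (k + 1) = qpF q x k * (1 - x * q ^ k) :=
  prod_range_succ _ _

lemma prod_range_one_sub_pow_div_pow (hq : q ≠ 0) (k : ℕ) :
    ∏ j ∈ range k, (1 - q ^ j / q ^ k) = (-1) ^ k / q ^ (k * (k + 1) / 2) * qpF q q k := by
  induction k with
  | zero => simp [qpF]
  | succ k ih =>
    have hshift : ∀ j ∈ range k, 1 - q ^ (j + 1) / q ^ (k + 1) = 1 - q ^ j / q ^ k := by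
      intro j _
      rw [pow_succ, pow_succ, mul_div_mul_right _ _ hq]
    rw [prod_range_succ', prod_congr rfl hshift, ih, qpF_succ, pow_triangle_succ q]
    field_simp
    ring

lemma prod_Ico_one_sub_pow_div_pow (hq : q ≠ 0) (k n : ℕ) :
    ∏ j ∈ Ico (k + 1) n, (1 - q ^ j / q ^ k) = qpF q q (n - 1 - k) := by
  rw [prod_Ico_eq_prod_range, show n - (k + 1) = n - 1 - k by omega, qpF]
  refine prod_congr rfl fun i _ => ?_
  rw [show k + 1 + i = k + (i + 1) by ring, pow_add, mul_div_cancel_left₀ _ (pow_ne_zero k hq),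
    pow_succ']

lemma prod_erase_one_sub_pow_div_pow (hq : q ≠ 0) {k n : ℕ} (hk : k < n) :
    ∏ j ∈ (range n).erase k, (1 - q ^ j / q ^ k) =
      (-1) ^ k / q ^ (k * (k + 1) / 2) * (qpF q q k * qpF q q (n - 1 - k)) := by
  have hsplit : (range n).erase k = range k ∪ Ico (k + 1) n := by
    ext j; simp only [mem_erase, mem_range, mem_union, mem_Ico]; omega
  have hdisj : Disjoint (range k) (Ico (k + 1) n) := by
    simp only [disjoint_left, mem_range, mem_Ico]; omega
  rw [hsplit, prod_union hdisj, prod_range_one_sub_pow_div_pow hq,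
    prod_Ico_one_sub_pow_div_pow hq, mul_assoc]

lemma one_sub_self_mul_pow_ne_zero (hq : Injective (q ^ · : ℕ → ℂ)) (n : ℕ) :
    1 - q * q ^ n ≠ 0 := fun h =>
  Nat.succ_ne_zero n <| hq <| show q ^ (n + 1) = q ^ 0 by
    rw [pow_zero, pow_succ']; exact (sub_eq_zero.mp h).symm

lemma qpF_self_ne_zero (hq : Injective (q ^ · : ℕ → ℂ)) (k : ℕ) : qpF q q k ≠ 0 :=
  prod_ne_zero_iff.mpr fun j _ => one_sub_self_mul_pow_ne_zero hq j

theorem sum_mul_prod_erase_eq_one (hq : Injective (q ^ · : ℕ → ℂ)) (x : ℂ) {n : ℕ} (hn : 0 < n) :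
    ∑ k ∈ range n, (-1) ^ k * q ^ (k * (k + 1) / 2) / (qpF q q k * qpF q q (n - 1 - k)) *
      ∏ j ∈ (range n).erase k, (1 - x * q ^ j) = 1 := by
  have hv : Set.InjOn (fun k : ℕ => (q ^ k)⁻¹) (range n) := (inv_injective.comp hq).injOn
  have hlagrange := congrArg (Polynomial.eval x) (Lagrange.sum_basis hv ⟨0, mem_range.mpr hn⟩)
  rw [Polynomial.eval_finsetSum, Polynomial.eval_one] at hlagrange
  refine Eq.trans (sum_congr rfl fun k hk => ?_) hlagrange
  rw [Lagrange.basis, Polynomial.eval_prod,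
    prod_congr rfl fun j hj => eval_basisDivisor_inv_pow hq x (ne_of_mem_erase hj),
    prod_div_distrib,
    prod_erase_one_sub_pow_div_pow (ne_zero_of_injective_pow hq) (mem_range.mp hk)]
  have hQ := mul_ne_zero (qpF_self_ne_zero hq k) (qpF_self_ne_zero hq (n - 1 - k))
  have hsign : ((-1 : ℂ) ^ k) ^ 2 = 1 := by rw [sq, ← mul_pow, neg_one_mul, neg_neg, one_pow]
  field_simp
  rw [hsign, one_mul]

lemma injective_pow_of_norm_lt_one (hq0 : q ≠ 0) (hq : ‖q‖ < 1) :
    Injective (q ^ · : ℕ → ℂ) := fun i j h =>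
  pow_right_injective₀ (norm_pos_iff.mpr hq0) hq.ne (by simpa only [norm_pow] using congrArg norm h)

lemma summable_norm_mul_pow (hq : ‖q‖ < 1) (x : ℂ) : Summable fun n : ℕ => ‖x * q ^ n‖ := by
  simpa only [norm_mul, norm_pow] using
    (summable_geometric_of_lt_one (norm_nonneg q) hq).mul_left ‖x‖

lemma tendsto_qpF_qp (hq : ‖q‖ < 1) (x : ℂ) : Tendsto (qpF q x) atTop (𝓝 (qp q x)) := by
  have := multipliable_one_add_of_summable (f := fun n => -(x * q ^ n))
    (by simpa only [norm_neg] using summable_norm_mul_pow hq x)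
  simp only [← sub_eq_add_neg] at this
  exact this.hasProd.tendsto_prod_nat

lemma qp_ne_zero (hq : ‖q‖ < 1) {x : ℂ} (hx : ∀ n, 1 - x * q ^ n ≠ 0) : qp q x ≠ 0 := by
  have := tprod_one_add_ne_zero_of_summable (f := fun n => -(x * q ^ n))
    (by simpa only [← sub_eq_add_neg] using hx)
    (by simpa only [norm_neg] using summable_norm_mul_pow hq x)
  simpa only [← sub_eq_add_neg, qp] using this

theorem inv_qp_eq_tsum (hq0 : q ≠ 0) (hq : ‖q‖ < 1) {x : ℂ} (hx : ∀ k, 1 - x * q ^ k ≠ 0) :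
    (qp q x)⁻¹ = (qp q q)⁻¹ *
      ∑' k : ℕ, (-1) ^ k * q ^ (k * (k + 1) / 2) / (qpF q q k * (1 - x * q ^ k)) := by
  set c : ℕ → ℂ := fun k => (-1) ^ k * q ^ (k * (k + 1) / 2) / (qpF q q k * (1 - x * q ^ k))
  have hinj := injective_pow_of_norm_lt_one hq0 hq
  have hqq : qp q q ≠ 0 := qp_ne_zero hq (one_sub_self_mul_pow_ne_zero hinj)
  obtain ⟨δ, hδ, hδle⟩ :=
    exists_pos_le_norm_of_tendsto (tendsto_qpF_qp hq q) hqq (qpF_self_ne_zero hinj)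
  have hxlim : Tendsto (fun k : ℕ => 1 - x * q ^ k) atTop (𝓝 1) := by
    simpa using tendsto_const_nhds.sub
      (tendsto_const_nhds.mul (tendsto_pow_atTop_nhds_zero_of_norm_lt_one hq))
  obtain ⟨ε, hε, hεle⟩ := exists_pos_le_norm_of_tendsto hxlim one_ne_zero hx
  have hbound (n k : ℕ) : ‖c k / qpF q q (n - 1 - k)‖ ≤ ‖q‖ ^ k / (δ * ε * δ) := by
    have hexp : k ≤ k * (k + 1) / 2 := by
      rcases k with _ | k
      · rfl
      · exact (Nat.le_div_iff_mul_le two_pos).mpr (Nat.mul_le_mul_left _ (by omega))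
    simp only [c, norm_div, norm_mul, norm_pow, norm_neg, norm_one, one_pow, one_mul]
    rw [div_div]
    exact div_le_div₀ (by positivity) (pow_le_pow_of_le_one (norm_nonneg q) hq.le hexp)
      (by positivity) (by gcongr <;> apply_assumption)
  have hpartial : Tendsto (fun n => ∑ k ∈ range n, c k / qpF q q (n - 1 - k)) atTop
      (𝓝 (∑' k, c k / qp q q)) := by
    refine tendsto_sum_range_of_dominated
      ((summable_geometric_of_lt_one (norm_nonneg q) hq).div_const _) (fun k => ?_) hbound
    refine tendsto_const_nhds.div ((tendsto_qpF_qp hq q).comp ?_) hqq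
    simpa only [Nat.sub_sub] using tendsto_sub_atTop_nat (1 + k)
  have hfinite : ∀ n > 0, qpF q x n * ∑ k ∈ range n, c k / qpF q q (n - 1 - k) = 1 := by
    intro n hn
    rw [mul_sum, ← sum_mul_prod_erase_eq_one hinj x hn]
    refine sum_congr rfl fun k hk => ?_
    rw [qpF, ← prod_erase_mul _ _ hk]
    have := hx k
    simp only [c]
    field_simp
  have hprod : qp q x * ∑' k, c k / qp q q = 1 :=
    tendsto_nhds_unique ((tendsto_qpF_qp hq x).mul hpartial)
      (tendsto_const_nhds.congr' ((eventually_gt_atTop 0).mono fun n hn => (hfinite n hn).symm))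
  rw [inv_eq_of_mul_eq_one_right hprod, ← tsum_mul_left]
  exact tsum_congr fun k => div_eq_inv_mul _ _

end QPochhammer

theorem stmt3_general (q : ℝ) (hq0 : 0 < q) (hq1 : q < 1) (b z : ℂ)
    (hz : ∀ k : ℕ, z ≠ b⁻¹ * (q : ℂ) ^ (-(k : ℤ))) :
    1 / qp q (b * z) =
      (1 / qp q q) * ∑' k : ℕ,
        (-1) ^ k * (q : ℂ) ^ (k * (k + 1) / 2) /
          (qpF q q k * (1 - z * b * (q : ℂ) ^ k)) := by
  have hnorm : ‖(q : ℂ)‖ < 1 := by rwa [Complex.norm_real, Real.norm_of_nonneg hq0.le]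
  have hzb (k : ℕ) : 1 - z * b * (q : ℂ) ^ k ≠ 0 := by
    intro h
    refine hz k ?_
    rw [zpow_neg, zpow_natCast, ← mul_inv]
    exact eq_inv_of_mul_eq_one_left (by linear_combination -h)
  rw [one_div, one_div, mul_comm b z, inv_qp_eq_tsum (by exact_mod_cast hq0.ne') hnorm hzb]

theorem stmt3 (q : ℝ) (hq0 : 0 < q) (hq1 : q < 1) (b z : ℂ) (hb : b ≠ 0)
    (hz : ∀ k : ℕ, z ≠ b⁻¹ * (q : ℂ) ^ (-(k : ℤ))) :
    1 / qp q (b * z) =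
      (1 / qp q q) * ∑' k : ℕ,
        (-1) ^ k * (q : ℂ) ^ (k * (k + 1) / 2) /
          (qpF q q k * (1 - z * b * (q : ℂ) ^ k)) :=
  stmt3_general q hq0 hq1 b z hz
end

section
/- Let 0<q<1 and define e_q((1-q²)x/2) = Σ_{n=0}^∞ ((1-q²)^n x^n)/((q;q)_n 2^n) = 1/(((1-q²)x/2;q)_∞). Then for every real s ≠ 0, lim_{m→∞} |e_q(i (1-q²) q^{-m} s / 2)| = 0. -/
/-- The q-exponential `e_q((1-q²)x/2) = 1/(((1-q²)x/2;q)_∞)` (meromorphic continuation). -/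
noncomputable def eq' (q : ℝ) (x : ℂ) : ℂ := (qp q ((1 - (q : ℂ) ^ 2) / 2 * x))⁻¹

/-!
On the imaginary axis every factor `1 - x qⁿ` of `(x;q)_∞` has real part `1`, so `‖(x;q)_∞‖ ≥ 1`.
Peeling off the first factor, `(x;q)_∞ = (1 - x) (xq;q)_∞`, then gives `‖(x;q)_∞‖ ≥ ‖1 - x‖ ≥ ‖x‖`.
Hence `‖(x;q)_∞⁻¹‖ ≤ ‖x‖⁻¹`, while the argument `i(1-q²)q^{-m}s/2` grows like `q^{-m}`.
-/

open Filter

theorem one_le_norm_tprod {ι R : Type*} [NormedCommRing R] [NormMulClass R] [NormOneClass R]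
    {f : ι → R} (hf : ∀ i, 1 ≤ ‖f i‖) : 1 ≤ ‖∏' i, f i‖ := by
  by_cases hm : Multipliable f
  · exact ge_of_tendsto' hm.hasProd.norm fun s => Finset.one_le_prod fun i _ => hf i
  · simp [tprod_eq_one_of_not_multipliable hm]

theorem multipliable_one_sub_mul_pow {q : ℂ} (hq : ‖q‖ < 1) (x : ℂ) :
    Multipliable fun n : ℕ => 1 - x * q ^ n := by
  have hsum : Summable fun n : ℕ => ‖-(x * q ^ n)‖ := by
    simpa only [norm_neg, norm_mul, norm_pow] using
      (summable_geometric_of_lt_one (norm_nonneg q) hq).mul_left ‖x‖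
  simpa only [← sub_eq_add_neg] using multipliable_one_add_of_summable hsum

theorem qp_eq_one_sub_mul_qp {q : ℂ} (hq : ‖q‖ < 1) (x : ℂ) :
    qp q x = (1 - x) * qp q (x * q) := by
  have hshift : Multipliable fun n : ℕ => 1 - x * q ^ (n + 1) := by
    simpa only [pow_succ', mul_assoc, mul_left_comm q] using multipliable_one_sub_mul_pow hq (x * q)
  rw [qp, tprod_eq_zero_mul' (f := fun n => 1 - x * q ^ n) hshift, qp]
  simp only [pow_zero, mul_one, pow_succ', mul_assoc]

theorem one_le_norm_qp {q : ℝ} {x : ℂ} (hx : x.re = 0) : 1 ≤ ‖qp q x‖ :=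
  one_le_norm_tprod fun n => by
    simpa [hx, ← Complex.ofReal_pow] using Complex.abs_re_le_norm (1 - x * (q : ℂ) ^ n)

theorem norm_le_norm_qp {q : ℝ} (hq : |q| < 1) {x : ℂ} (hx : x.re = 0) : ‖x‖ ≤ ‖qp q x‖ := by
  have hx' : ‖x‖ ≤ ‖1 - x‖ := by
    simpa [← Complex.abs_im_eq_norm.mpr hx] using Complex.abs_im_le_norm (1 - x)
  rw [qp_eq_one_sub_mul_qp (by simpa using hq)]
  calc ‖x‖ ≤ ‖1 - x‖ * 1 := by simpa using hx'
    _ ≤ ‖1 - x‖ * ‖qp q (x * q)‖ := by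
        gcongr
        exact one_le_norm_qp (by simp [hx])
    _ = _ := (norm_mul _ _).symm

theorem stmt5 (q : ℝ) (hq0 : 0 < q) (hq1 : q < 1) (s : ℝ) (hs : s ≠ 0) :
    Filter.Tendsto
      (fun m : ℕ => ‖eq' q (Complex.I * (q : ℂ) ^ (-(m : ℤ)) * (s : ℂ))‖)
      Filter.atTop (nhds 0) := by
  set c : ℝ := (1 - q ^ 2) / 2 * s
  have hc : c ≠ 0 := mul_ne_zero (by nlinarith) hs
  have harg : ∀ m : ℕ, (1 - (q : ℂ) ^ 2) / 2 * (Complex.I * (q : ℂ) ^ (-(m : ℤ)) * (s : ℂ)) =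
      ((c * (q⁻¹) ^ m : ℝ) : ℂ) * Complex.I := by
    intro m
    simp only [c, zpow_neg, zpow_natCast]
    push_cast
    ring
  have hnorm : ∀ m : ℕ, ‖((c * (q⁻¹) ^ m : ℝ) : ℂ) * Complex.I‖ = |c| * (q⁻¹) ^ m := by
    simp [abs_of_pos hq0]
  have hgrow : Tendsto (fun m : ℕ => |c| * (q⁻¹) ^ m) atTop atTop :=
    (tendsto_pow_atTop_atTop_of_one_lt ((one_lt_inv₀ hq0).2 hq1)).const_mul_atTop (abs_pos.2 hc)
  refine squeeze_zero (fun m => norm_nonneg _) (fun m => ?_) (tendsto_inv_atTop_zero.comp hgrow)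
  rw [Function.comp_apply, eq', norm_inv, harg, ← hnorm]
  have hre : (((c * (q⁻¹) ^ m : ℝ) : ℂ) * Complex.I).re = 0 := by
    rw [Complex.mul_I_re, Complex.ofReal_im, neg_zero]
  exact inv_anti₀ (by rw [hnorm]; positivity) (norm_le_norm_qp (abs_lt.2 ⟨by linarith, hq1⟩) hre)
end

section
/- Let 0<q<1 and α > β+1 real. Then there is a constant C (depending on q, α, β) such that for every real z ≠ 0, (-q^{2α}z²;q²)_∞/(-q^{2β}z²;q²)_∞ ≤ C/(1 + z² q^{2β}). -/
set_option maxHeartbeats 800000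

/-- The infinite q-Pochhammer symbol over the reals. -/
noncomputable def qpR (q x : ℝ) : ℝ := ∏' n : ℕ, (1 - x * q ^ n)

lemma log_sum_aux {c r : ℝ} (hc : 0 ≤ c) (hr0 : 0 ≤ r) (hr1 : r < 1) :
    Summable (fun n : ℕ => Real.log (1 + c * r ^ n)) := by
  apply Summable.of_nonneg_of_le (fun n => Real.log_nonneg (by nlinarith [pow_nonneg hr0 n]))
    (fun n => ?_) (Summable.mul_left c (summable_geometric_of_lt_one hr0 hr1))
  have hpos : (0:ℝ) < 1 + c * r ^ n := by nlinarith [pow_nonneg hr0 n]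
  have := Real.log_le_sub_one_of_pos hpos
  linarith

lemma log_nonneg_aux {c r : ℝ} (hc : 0 ≤ c) (hr0 : 0 ≤ r) (n : ℕ) :
    0 ≤ Real.log (1 + c * r ^ n) :=
  Real.log_nonneg (by nlinarith [pow_nonneg hr0 n])

lemma tprod_exp_aux {c r : ℝ} (hc : 0 ≤ c) (hr0 : 0 ≤ r) (hr1 : r < 1) :
    ∏' n : ℕ, (1 + c * r ^ n)
      = Real.exp (∑' n : ℕ, Real.log (1 + c * r ^ n)) := by
  have hpos : ∀ n : ℕ, (0:ℝ) < 1 + c * r ^ n :=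
    fun n => by nlinarith [pow_nonneg hr0 n]
  have h := (log_sum_aux hc hr0 hr1).hasSum.rexp
  have h2 : HasProd (fun n : ℕ => 1 + c * r ^ n)
      (Real.exp (∑' n : ℕ, Real.log (1 + c * r ^ n))) := by
    apply h.congr
    intro s
    exact Finset.prod_congr rfl fun i _ => Real.exp_log (hpos i)
  exact h2.tprod_eq

theorem stmt9 (q α β : ℝ) (hq0 : 0 < q) (hq1 : q < 1) (hab : α > β + 1) :
    ∃ C : ℝ, ∀ z : ℝ, z ≠ 0 →
      qpR (q ^ 2) (-(q ^ (2 * α) * z ^ 2)) / qpR (q ^ 2) (-(q ^ (2 * β) * z ^ 2)) ≤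
        C / (1 + z ^ 2 * q ^ (2 * β)) := by
  refine ⟨1, fun z hz => ?_⟩
  set r : ℝ := q ^ 2 with hr
  have hr0 : 0 ≤ r := by positivity
  have hr1 : r < 1 := by
    have := pow_lt_one₀ hq0.le hq1 (n := 2) (by norm_num)
    simpa [hr] using this
  set a : ℝ := q ^ (2 * α) * z ^ 2 with ha
  set b : ℝ := q ^ (2 * β) * z ^ 2 with hb
  have ha0 : 0 ≤ a := by positivity
  have hb0 : 0 ≤ b := by positivity
  have hbr0 : 0 ≤ b * r := by positivity
  -- key: a ≤ b * r
  have hkey : a ≤ b * r := by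
    have h1 : q ^ (2 * α) ≤ q ^ (2 * β + 2) :=
      Real.rpow_le_rpow_of_exponent_ge hq0 hq1.le (by linarith)
    have h2 : q ^ (2 * β + 2) = q ^ (2 * β) * r := by
      rw [Real.rpow_add hq0, hr]
      congr 1
      rw [show (2:ℝ) = ((2:ℕ):ℝ) by norm_num, Real.rpow_natCast]
    have hz2 : 0 ≤ z ^ 2 := sq_nonneg z
    calc a = q ^ (2 * α) * z ^ 2 := ha
      _ ≤ q ^ (2 * β + 2) * z ^ 2 := by nlinarith
      _ = q ^ (2 * β) * z ^ 2 * r := by rw [h2]; ring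
  -- rewrite qpR values
  have hAeq : qpR r (-a) = ∏' n : ℕ, (1 + a * r ^ n) := by
    unfold qpR; exact tprod_congr fun n => by ring
  have hBeq : qpR r (-b) = ∏' n : ℕ, (1 + b * r ^ n) := by
    unfold qpR; exact tprod_congr fun n => by ring
  -- log sums
  set LA : ℝ := ∑' n : ℕ, Real.log (1 + a * r ^ n) with hLA
  set LB : ℝ := ∑' n : ℕ, Real.log (1 + b * r ^ n) with hLB
  set LS : ℝ := ∑' n : ℕ, Real.log (1 + (b * r) * r ^ n) with hLS
  have hsA := log_sum_aux ha0 hr0 hr1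
  have hsB := log_sum_aux hb0 hr0 hr1
  have hsS := log_sum_aux hbr0 hr0 hr1
  have hA : (∏' n : ℕ, (1 + a * r ^ n)) = Real.exp LA := tprod_exp_aux ha0 hr0 hr1
  have hB : (∏' n : ℕ, (1 + b * r ^ n)) = Real.exp LB := tprod_exp_aux hb0 hr0 hr1
  -- split off first term of LB
  have hsplit : LB = Real.log (1 + b) + LS := by
    rw [hLB, Summable.tsum_eq_zero_add hsB]
    congr 1
    · norm_num
    · rw [hLS]
      exact tsum_congr fun n => by rw [pow_succ]; ring_nf
  -- compare LA with LS
  have hcomp : LA ≤ LS := by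
    apply Summable.tsum_le_tsum (fun n => ?_) hsA hsS
    have hrn : 0 ≤ r ^ n := pow_nonneg hr0 n
    apply Real.log_le_log (by nlinarith)
    nlinarith
  have hb1 : (0:ℝ) < 1 + b := by linarith
  have hbz : 1 + z ^ 2 * q ^ (2 * β) = 1 + b := by rw [hb]; ring
  rw [hAeq, hBeq, hA, hB, hsplit, hbz, Real.exp_add, Real.exp_log hb1]
  rw [div_le_div_iff₀ (by positivity) hb1]
  have hle : Real.exp LA ≤ Real.exp LS := Real.exp_le_exp.mpr hcomp
  nlinarith [Real.exp_pos LS, Real.exp_pos LA]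
end

section
/- Let 0<q<1 and α > β + 1/2 real. Then lim_{m→∞} (-q^{2(α-m)};q²)_∞ / (-q^{2(β-m)};q²)_∞ = 0. -/
open Filter Real

private noncomputable def auxP (Q x : ℝ) : ℝ := ∏' n : ℕ, (1 + x * Q ^ n)

private lemma hasProd_of_summable_log {f : ℕ → ℝ} (hf : ∀ n, 0 < f n)
    (h : Summable fun n => Real.log (f n)) :
    HasProd f (Real.exp (∑' n, Real.log (f n))) := by
  have hS := h.hasSum
  have h2 : Filter.Tendsto (fun s : Finset ℕ => Real.exp (∑ i ∈ s, Real.log (f i)))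
      Filter.atTop (nhds (Real.exp (∑' n, Real.log (f n)))) :=
    (Real.continuous_exp.tendsto _).comp hS
  refine h2.congr fun s => ?_
  rw [Real.exp_sum]
  exact Finset.prod_congr rfl fun i _ => Real.exp_log (hf i)

private lemma qp_summable_log {Q x : ℝ} (hQ0 : 0 < Q) (hQ1 : Q < 1) (hx : 0 ≤ x) :
    Summable fun n : ℕ => Real.log (1 + x * Q ^ n) := by
  have hgeo : Summable fun n : ℕ => x * Q ^ n :=
    (summable_geometric_of_lt_one hQ0.le hQ1).mul_left x
  refine Summable.of_nonneg_of_le (fun n => Real.log_nonneg ?_) (fun n => ?_) hgeo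
  · have := pow_pos hQ0 n
    nlinarith
  · have hpos : (0:ℝ) < 1 + x * Q ^ n := by
      have := pow_pos hQ0 n
      nlinarith
    have := Real.log_le_sub_one_of_pos hpos
    linarith

private lemma qp_hasProd {Q x : ℝ} (hQ0 : 0 < Q) (hQ1 : Q < 1) (hx : 0 ≤ x) :
    HasProd (fun n : ℕ => 1 + x * Q ^ n)
      (Real.exp (∑' n : ℕ, Real.log (1 + x * Q ^ n))) := by
  refine hasProd_of_summable_log (fun n => ?_) (qp_summable_log hQ0 hQ1 hx)
  have := pow_pos hQ0 n
  nlinarith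

private lemma qp_pos {Q x : ℝ} (hQ0 : 0 < Q) (hQ1 : Q < 1) (hx : 0 ≤ x) :
    0 < auxP Q x := by
  rw [auxP, (qp_hasProd hQ0 hQ1 hx).tprod_eq]
  exact Real.exp_pos _

private lemma qp_shift {Q x : ℝ} (hQ0 : 0 < Q) (hQ1 : Q < 1) (hx : 0 ≤ x) :
    auxP Q x = (1 + x) * auxP Q (x * Q) := by
  have hm : Multipliable fun n : ℕ => 1 + (x * Q) * Q ^ n :=
    (qp_hasProd hQ0 hQ1 (by positivity)).multipliable
  have hm' : Multipliable fun n : ℕ => 1 + x * Q ^ (n + 1) := by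
    refine hm.congr fun n => ?_
    rw [pow_succ]
    ring
  have key := tprod_eq_zero_mul' (f := fun n : ℕ => 1 + x * Q ^ n) hm'
  rw [auxP, auxP, key]
  congr 1
  · simp
  · exact tprod_congr fun n => by rw [pow_succ]; ring

private lemma ratio_tendsto {Q r : ℝ} (hQ0 : 0 < Q) (hQ1 : Q < 1)
    (c d : ℕ → ℝ) (hc : ∀ m, 0 < c m) (hd : ∀ m, 0 < d m)
    (hr1 : r < 1) (hcd : ∀ m, c m = r * d m)
    (hcQ : ∀ m, c (m + 1) * Q = c m) (hdQ : ∀ m, d (m + 1) * Q = d m)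
    (hdtop : Filter.Tendsto d Filter.atTop Filter.atTop) :
    Filter.Tendsto (fun m => auxP Q (c m) / auxP Q (d m)) Filter.atTop (nhds 0) := by
  have hr0 : 0 < r := by
    have := hcd 0
    have := hc 0
    have := hd 0
    nlinarith
  set R : ℕ → ℝ := fun m => auxP Q (c m) / auxP Q (d m) with hRdef
  have hPc : ∀ m, 0 < auxP Q (c m) := fun m => qp_pos hQ0 hQ1 (hc m).le
  have hPd : ∀ m, 0 < auxP Q (d m) := fun m => qp_pos hQ0 hQ1 (hd m).le
  have hRpos : ∀ m, 0 < R m := fun m => div_pos (hPc m) (hPd m)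
  have hCrec : ∀ m, auxP Q (c (m + 1)) = (1 + c (m + 1)) * auxP Q (c m) := by
    intro m
    rw [qp_shift hQ0 hQ1 (hc (m + 1)).le, hcQ m]
  have hDrec : ∀ m, auxP Q (d (m + 1)) = (1 + d (m + 1)) * auxP Q (d m) := by
    intro m
    rw [qp_shift hQ0 hQ1 (hd (m + 1)).le, hdQ m]
  have hRrec : ∀ m, R (m + 1) = R m * ((1 + c (m + 1)) / (1 + d (m + 1))) := by
    intro m
    rw [hRdef]
    simp only
    rw [hCrec m, hDrec m, div_mul_div_comm, mul_comm (auxP Q (c m)), mul_comm (auxP Q (d m))]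
  set s : ℝ := (1 + r) / 2 with hsdef
  have hs0 : 0 < s := by positivity
  have hs1 : s < 1 := by rw [hsdef]; linarith
  have hrs : r < s := by rw [hsdef]; linarith
  obtain ⟨M, hM⟩ := Filter.eventually_atTop.mp (hdtop.eventually_ge_atTop ((1 - s) / (s - r)))
  have hρ : ∀ m, M ≤ m → (1 + c m) / (1 + d m) ≤ s := by
    intro m hm
    have hdm := hM m hm
    have h1 : 1 - s ≤ (s - r) * d m := by
      rw [div_le_iff₀ (by linarith)] at hdm
      linarith [hdm]
    rw [div_le_iff₀ (by linarith [hd m])]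
    rw [hcd m]
    nlinarith [hd m]
  have hdecay : ∀ m, M ≤ m → R (m + 1) ≤ s * R m := by
    intro m hm
    rw [hRrec m, mul_comm]
    exact mul_le_mul_of_nonneg_right (hρ (m + 1) (by omega)) (hRpos m).le
  have hbound : ∀ k : ℕ, R (M + k) ≤ R M * s ^ k := by
    intro k
    induction k with
    | zero => simp
    | succ k ih =>
      have h1 : R (M + k + 1) ≤ s * R (M + k) := hdecay (M + k) (by omega)
      have h2 : s * R (M + k) ≤ s * (R M * s ^ k) :=
        mul_le_mul_of_nonneg_left ih hs0.le
      calc R (M + (k + 1)) = R (M + k + 1) := by ring_nf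
        _ ≤ s * (R M * s ^ k) := h1.trans h2
        _ = R M * s ^ (k + 1) := by ring
  have hg : Filter.Tendsto (fun m : ℕ => R M * s ^ (m - M)) Filter.atTop (nhds 0) := by
    have h1 : Filter.Tendsto (fun m : ℕ => s ^ (m - M)) Filter.atTop (nhds 0) :=
      (tendsto_pow_atTop_nhds_zero_of_lt_one hs0.le hs1).comp (tendsto_sub_atTop_nat M)
    simpa using h1.const_mul (R M)
  refine squeeze_zero' (Filter.Eventually.of_forall fun m => (hRpos m).le) ?_ hg
  rw [Filter.eventually_atTop]
  refine ⟨M, fun m hm => ?_⟩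
  have : R m = R (M + (m - M)) := by congr 1; omega
  rw [this]
  exact hbound (m - M)

theorem stmt10 (q α β : ℝ) (hq0 : 0 < q) (hq1 : q < 1) (hab : α > β + 1 / 2) :
    Filter.Tendsto
      (fun m : ℕ =>
        qpR (q ^ 2) (-(q ^ (2 * (α - m)))) / qpR (q ^ 2) (-(q ^ (2 * (β - m)))))
      Filter.atTop (nhds 0) := by
  have hQ0 : (0:ℝ) < q ^ 2 := by positivity
  have hQ1 : q ^ 2 < 1 := by nlinarith
  have hc : ∀ m : ℕ, (0:ℝ) < q ^ (2 * (α - (m:ℝ))) := fun m => Real.rpow_pos_of_pos hq0 _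
  have hd : ∀ m : ℕ, (0:ℝ) < q ^ (2 * (β - (m:ℝ))) := fun m => Real.rpow_pos_of_pos hq0 _
  have hr1 : q ^ (2 * (α - β)) < 1 := Real.rpow_lt_one hq0.le hq1 (by linarith)
  have hcd : ∀ m : ℕ, q ^ (2 * (α - (m:ℝ))) = q ^ (2 * (α - β)) * q ^ (2 * (β - (m:ℝ))) := by
    intro m
    rw [← Real.rpow_add hq0]
    congr 1
    ring
  have hcQ : ∀ m : ℕ, q ^ (2 * (α - ((m+1:ℕ):ℝ))) * q ^ 2 = q ^ (2 * (α - (m:ℝ))) := by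
    intro m
    rw [← Real.rpow_natCast q 2, ← Real.rpow_add hq0]
    congr 1
    push_cast
    ring
  have hdQ : ∀ m : ℕ, q ^ (2 * (β - ((m+1:ℕ):ℝ))) * q ^ 2 = q ^ (2 * (β - (m:ℝ))) := by
    intro m
    rw [← Real.rpow_natCast q 2, ← Real.rpow_add hq0]
    congr 1
    push_cast
    ring
  have hdtop : Filter.Tendsto (fun m : ℕ => q ^ (2 * (β - (m:ℝ)))) Filter.atTop Filter.atTop := by
    have hone : (1:ℝ) < q ^ (-2 : ℝ) := by
      rw [Real.one_lt_rpow_iff_of_pos hq0]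
      right
      exact ⟨hq1, by norm_num⟩
    have h1 : Filter.Tendsto (fun m : ℕ => (q ^ (-2 : ℝ)) ^ m) Filter.atTop Filter.atTop :=
      tendsto_pow_atTop_atTop_of_one_lt hone
    have h2 := h1.const_mul_atTop (Real.rpow_pos_of_pos hq0 (2 * β))
    refine h2.congr fun m => ?_
    rw [← Real.rpow_natCast (q ^ (-2:ℝ)) m, ← Real.rpow_mul hq0.le, ← Real.rpow_add hq0]
    congr 1
    ring
  have hmain := ratio_tendsto hQ0 hQ1 (fun m : ℕ => q ^ (2 * (α - (m:ℝ))))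
    (fun m : ℕ => q ^ (2 * (β - (m:ℝ)))) hc hd hr1 hcd hcQ hdQ hdtop
  refine hmain.congr fun m => ?_
  have hqp : ∀ x : ℝ, auxP (q ^ 2) x = qpR (q ^ 2) (-x) := by
    intro x
    rw [auxP, qpR]
    exact tprod_congr fun n => by ring
  simp only [hqp]
end

section
/- Let 0<q<1 and ν > 0. Then (1-q)·Σ_{m=-∞}^∞ q^{2m}·(-q^{2m+2};q²)_∞/(-q^{2m-2ν};q²)_∞ converges, and ∫_0^∞ z·(-q²z²;q²)_∞/(-q^{-2ν}z²;q²)_∞ d_q z = (1-q)·Σ_{m=-∞}^∞ q^{2m}·(-q^{2m+2};q²)_∞/(-q^{2m-2ν};q²)_∞ = -(1-q)/(1-q^{-2ν}). -/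
open Filter Topology

variable {Q : ℝ}

lemma aux_sum (hQ0 : 0 < Q) (hQ1 : Q < 1) (x : ℝ) :
    Summable (fun n : ℕ => x * Q ^ n) :=
  (summable_geometric_of_lt_one hQ0.le hQ1).mul_left x

lemma aux_prod_le (hQ0 : 0 < Q) (hQ1 : Q < 1) {x : ℝ} (hx : 0 ≤ x) (s : Finset ℕ) :
    ∏ n ∈ s, (1 + x * Q ^ n) ≤ Real.exp (x * (1 - Q)⁻¹) := by
  have hnn : ∀ n : ℕ, 0 ≤ x * Q ^ n := fun n => mul_nonneg hx (pow_nonneg hQ0.le n)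
  calc ∏ n ∈ s, (1 + x * Q ^ n) ≤ ∏ n ∈ s, Real.exp (x * Q ^ n) := by
        refine Finset.prod_le_prod (fun n _ => by positivity) (fun n _ => ?_)
        have := Real.add_one_le_exp (x * Q ^ n)
        linarith
    _ = Real.exp (∑ n ∈ s, x * Q ^ n) := (Real.exp_sum s _).symm
    _ ≤ Real.exp (x * (1 - Q)⁻¹) := by
        apply Real.exp_le_exp.2
        have h1 : ∑ n ∈ s, x * Q ^ n ≤ ∑' n : ℕ, x * Q ^ n :=
          Summable.sum_le_tsum s (fun n _ => hnn n) (aux_sum hQ0 hQ1 x)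
        rwa [tsum_mul_left, tsum_geometric_of_lt_one hQ0.le hQ1] at h1

lemma aux_mult (hQ0 : 0 < Q) (hQ1 : Q < 1) {x : ℝ} (hx : 0 ≤ x) :
    Multipliable (fun n : ℕ => 1 + x * Q ^ n) := by
  have hone : ∀ s : Finset ℕ, 1 ≤ ∏ n ∈ s, (1 + x * Q ^ n) := by
    intro s
    calc (1:ℝ) = ∏ _n ∈ s, 1 := (Finset.prod_const_one).symm
      _ ≤ ∏ n ∈ s, (1 + x * Q ^ n) := Finset.prod_le_prod (fun _ _ => zero_le_one)
          (fun n _ => by nlinarith [mul_nonneg hx (pow_nonneg hQ0.le n)])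
  have hmono : Monotone (fun s : Finset ℕ => ∏ n ∈ s, (1 + x * Q ^ n)) := by
    intro s t hst
    dsimp only
    rw [← Finset.prod_sdiff hst]
    exact le_mul_of_one_le_left (le_trans zero_le_one (hone s)) (hone _)
  refine ⟨_, tendsto_atTop_ciSup hmono ⟨Real.exp (x * (1 - Q)⁻¹), ?_⟩⟩
  rintro y ⟨s, rfl⟩
  exact aux_prod_le hQ0 hQ1 hx s

lemma aux_one_le (hQ0 : 0 < Q) (hQ1 : Q < 1) {x : ℝ} (hx : 0 ≤ x) :
    1 ≤ ∏' n : ℕ, (1 + x * Q ^ n) := by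
  refine ge_of_tendsto' (aux_mult hQ0 hQ1 hx).hasProd (fun s => ?_)
  calc (1:ℝ) = ∏ _n ∈ s, 1 := (Finset.prod_const_one).symm
    _ ≤ ∏ n ∈ s, (1 + x * Q ^ n) := Finset.prod_le_prod (fun _ _ => zero_le_one)
        (fun n _ => by nlinarith [mul_nonneg hx (pow_nonneg hQ0.le n)])

lemma aux_le_exp (hQ0 : 0 < Q) (hQ1 : Q < 1) {x : ℝ} (hx : 0 ≤ x) :
    ∏' n : ℕ, (1 + x * Q ^ n) ≤ Real.exp (x * (1 - Q)⁻¹) :=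
  le_of_tendsto' (aux_mult hQ0 hQ1 hx).hasProd (fun s => aux_prod_le hQ0 hQ1 hx s)

lemma aux_tendsto_one (hQ0 : 0 < Q) (hQ1 : Q < 1) {x : ℕ → ℝ} (hx0 : ∀ n, 0 ≤ x n)
    (hx : Tendsto x atTop (𝓝 0)) :
    Tendsto (fun n => ∏' k : ℕ, (1 + x n * Q ^ k)) atTop (𝓝 1) := by
  have hupper : Tendsto (fun n => Real.exp (x n * (1 - Q)⁻¹)) atTop (𝓝 1) := by
    have h2 : Tendsto (fun n => x n * (1 - Q)⁻¹) atTop (𝓝 0) := by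
      simpa using hx.mul_const (1 - Q)⁻¹
    have := (Real.continuous_exp.tendsto 0).comp h2
    rw [Real.exp_zero] at this
    exact this
  exact tendsto_of_tendsto_of_tendsto_of_le_of_le tendsto_const_nhds hupper
    (fun n => aux_one_le hQ0 hQ1 (hx0 n)) (fun n => aux_le_exp hQ0 hQ1 (hx0 n))

lemma aux_peel (hQ0 : 0 < Q) (hQ1 : Q < 1) {x : ℝ} (hx : 0 ≤ x) :
    ∏' n : ℕ, (1 + x * Q ^ n) = (1 + x) * ∏' n : ℕ, (1 + x * Q * Q ^ n) := by
  have hm : Multipliable (fun n : ℕ => 1 + x * Q ^ (n + 1)) :=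
    (aux_mult hQ0 hQ1 (mul_nonneg hx hQ0.le)).congr
      (fun n => by rw [pow_succ]; ring)
  have h := tprod_eq_zero_mul' (f := fun n : ℕ => 1 + x * Q ^ n) hm
  simp only [pow_zero, mul_one] at h
  rw [h]
  congr 1
  exact tprod_congr (fun n => by rw [pow_succ]; ring)

noncomputable def Pq (q t : ℝ) : ℝ := qpR (q ^ 2) (-(q ^ t))

variable {q : ℝ}

lemma Pq_eq (q t : ℝ) : Pq q t = ∏' n : ℕ, (1 + q ^ t * (q ^ 2) ^ n) := by
  unfold Pq qpR
  exact tprod_congr (fun n => by ring)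

lemma sq_lt_one (hq0 : 0 < q) (hq1 : q < 1) : q ^ 2 < 1 := by nlinarith

lemma Pq_pos (hq0 : 0 < q) (hq1 : q < 1) (t : ℝ) : 0 < Pq q t := by
  rw [Pq_eq]
  exact lt_of_lt_of_le one_pos
    (aux_one_le (by positivity) (sq_lt_one hq0 hq1) (Real.rpow_pos_of_pos hq0 t).le)

lemma Pq_peel (hq0 : 0 < q) (hq1 : q < 1) (t : ℝ) :
    Pq q t = (1 + q ^ t) * Pq q (t + 2) := by
  rw [Pq_eq, Pq_eq, aux_peel (by positivity) (sq_lt_one hq0 hq1) (Real.rpow_pos_of_pos hq0 t).le]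
  congr 1
  refine tprod_congr (fun n => ?_)
  rw [show (t + 2 : ℝ) = t + ((2:ℕ):ℝ) by norm_num, Real.rpow_add hq0, Real.rpow_natCast]

lemma rpow_seq_tendsto (hq0 : 0 < q) (hq1 : q < 1) (c : ℝ) :
    Filter.Tendsto (fun n : ℕ => q ^ (2 * (n : ℝ) + c)) Filter.atTop (nhds 0) := by
  have h1 : ∀ n : ℕ, q ^ (2 * (n : ℝ) + c) = (q ^ 2) ^ n * q ^ c := by
    intro n
    rw [Real.rpow_add hq0, show (2 * (n : ℝ)) = ((2 * n : ℕ) : ℝ) by push_cast; ring,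
      Real.rpow_natCast, pow_mul]
  simp only [h1]
  have := (tendsto_pow_atTop_nhds_zero_of_lt_one (by positivity : (0:ℝ) ≤ q ^ 2)
    (sq_lt_one hq0 hq1)).mul_const (q ^ c)
  simpa using this

lemma Pq_tendsto (hq0 : 0 < q) (hq1 : q < 1) (c : ℝ) :
    Filter.Tendsto (fun n : ℕ => Pq q (2 * (n : ℝ) + c)) Filter.atTop (nhds 1) := by
  simp only [Pq_eq]
  exact aux_tendsto_one (by positivity) (sq_lt_one hq0 hq1)
    (fun n => (Real.rpow_pos_of_pos hq0 _).le) (rpow_seq_tendsto hq0 hq1 c)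

lemma one_lt_s (hq0 : 0 < q) (hq1 : q < 1) {ν : ℝ} (hν : 0 < ν) : 1 < q ^ (-2 * ν) :=
  (Real.one_lt_rpow_iff_of_pos hq0).2 (Or.inr ⟨hq1, by linarith⟩)

lemma key_tel (hq0 : 0 < q) (hq1 : q < 1) {ν : ℝ} (hν : 0 < ν) (t : ℝ) :
    q ^ t * Pq q (t + 2) / Pq q (t - 2 * ν)
      = Pq q t / Pq q (t - 2 * ν) / (1 - q ^ (-2 * ν))
        - Pq q (t + 2) / Pq q (t + 2 - 2 * ν) / (1 - q ^ (-2 * ν)) := by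
  have hs1 : 1 < q ^ (-2 * ν) := one_lt_s hq0 hq1 hν
  have e1 := Pq_peel hq0 hq1 t
  have e2 := Pq_peel hq0 hq1 (t - 2 * ν)
  rw [show t - 2 * ν + 2 = t + 2 - 2 * ν by ring] at e2
  have hx : q ^ (t - 2 * ν) = q ^ t * q ^ (-2 * ν) := by
    rw [← Real.rpow_add hq0]; ring_nf
  rw [e1, e2, hx]
  have hA := Pq_pos hq0 hq1 (t + 2)
  have hB := Pq_pos hq0 hq1 (t + 2 - 2 * ν)
  have ht := Real.rpow_pos_of_pos hq0 t
  have hsp := Real.rpow_pos_of_pos hq0 (-2 * ν)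
  have h1 : (0:ℝ) < 1 + q ^ t * q ^ (-2 * ν) := by positivity
  have h2 : (1:ℝ) - q ^ (-2 * ν) ≠ 0 := by linarith
  set a := q ^ t with ha
  set w := q ^ (-2 * ν) with hw
  set A := Pq q (t + 2) with hA'
  set B := Pq q (t + 2 - 2 * ν) with hB'
  rw [div_div, div_div, div_sub_div _ _ (mul_ne_zero (mul_ne_zero h1.ne' hB.ne') h2)
      (mul_ne_zero hB.ne' h2),
    div_eq_div_iff (mul_pos h1 hB).ne'
      (mul_ne_zero (mul_ne_zero (mul_ne_zero h1.ne' hB.ne') h2) (mul_ne_zero hB.ne' h2))]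
  ring


theorem stmt16 (q ν : ℝ) (hq0 : 0 < q) (hq1 : q < 1) (hν : 0 < ν) :
    (Summable fun m : ℤ =>
      q ^ (2 * (m : ℝ)) * qpR (q ^ 2) (-(q ^ (2 * (m : ℝ) + 2))) /
        qpR (q ^ 2) (-(q ^ (2 * (m : ℝ) - 2 * ν)))) ∧
    (1 - q) * ∑' m : ℤ,
        q ^ (2 * (m : ℝ)) * qpR (q ^ 2) (-(q ^ (2 * (m : ℝ) + 2))) /
          qpR (q ^ 2) (-(q ^ (2 * (m : ℝ) - 2 * ν))) =
      -(1 - q) / (1 - q ^ (-2 * ν)) := by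
  have hs1 : 1 < q ^ (-2 * ν) := one_lt_s hq0 hq1 hν
  set s : ℝ := q ^ (-2 * ν) with hsdef
  have hs0 : 0 < s := Real.rpow_pos_of_pos hq0 _
  have h1s : (1 : ℝ) - s ≠ 0 := by linarith
  set f : ℤ → ℝ := fun m =>
      q ^ (2 * (m : ℝ)) * qpR (q ^ 2) (-(q ^ (2 * (m : ℝ) + 2))) /
        qpR (q ^ 2) (-(q ^ (2 * (m : ℝ) - 2 * ν))) with hfdef
  set G : ℤ → ℝ := fun m =>
      Pq q (2 * (m : ℝ)) / Pq q (2 * (m : ℝ) - 2 * ν) / (1 - s) with hGdef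
  -- telescoping
  have htel : ∀ m : ℤ, f m = G m - G (m + 1) := by
    intro m
    have h := key_tel hq0 hq1 hν (2 * (m : ℝ))
    have e1 : f m = q ^ (2 * (m : ℝ)) * Pq q (2 * (m : ℝ) + 2) / Pq q (2 * (m : ℝ) - 2 * ν) := rfl
    have e2 : G m = Pq q (2 * (m : ℝ)) / Pq q (2 * (m : ℝ) - 2 * ν) / (1 - s) := rfl
    have e3 : G (m + 1) =
        Pq q (2 * (m : ℝ) + 2) / Pq q (2 * (m : ℝ) + 2 - 2 * ν) / (1 - s) := by
      show Pq q (2 * ((m + 1 : ℤ) : ℝ)) / Pq q (2 * ((m + 1 : ℤ) : ℝ) - 2 * ν) / (1 - s) = _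
      rw [show (2 * ((m + 1 : ℤ) : ℝ)) = 2 * (m : ℝ) + 2 by push_cast; ring]
    rw [e1, e2, e3, ← hsdef] at *
    rw [h]
  have hf0 : ∀ m : ℤ, 0 ≤ f m := by
    intro m
    have e1 : f m = q ^ (2 * (m : ℝ)) * Pq q (2 * (m : ℝ) + 2) / Pq q (2 * (m : ℝ) - 2 * ν) := rfl
    rw [e1]
    exact div_nonneg (mul_nonneg (Real.rpow_pos_of_pos hq0 _).le (Pq_pos hq0 hq1 _).le)
      (Pq_pos hq0 hq1 _).le
  -- limit at +infinity
  have hGtop : Tendsto (fun n : ℕ => G (n : ℤ)) atTop (𝓝 (1 / (1 - s))) := by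
    have h1 := Pq_tendsto hq0 hq1 0
    have h2 := Pq_tendsto hq0 hq1 (-2 * ν)
    have h3 := (h1.div h2 one_ne_zero).div_const (1 - s)
    rw [show ((1:ℝ)/1)/(1-s) = 1/(1-s) by norm_num] at h3
    refine Tendsto.congr (fun n => ?_) h3
    show Pq q (2 * (n : ℝ) + 0) / Pq q (2 * (n : ℝ) + -2 * ν) / (1 - s) = G (n : ℤ)
    have e2 : G (n : ℤ) = Pq q (2 * ((n : ℤ) : ℝ)) / Pq q (2 * ((n : ℤ) : ℝ) - 2 * ν) / (1 - s) := rfl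
    rw [e2, show (((n : ℤ) : ℝ)) = (n : ℝ) by push_cast; ring,
      show (2 * (n : ℝ) + 0) = 2 * (n : ℝ) by ring,
      show (2 * (n : ℝ) + -2 * ν) = 2 * (n : ℝ) - 2 * ν by ring]
  -- limit at -infinity
  have hGneg : ∀ m : ℤ, G m < 0 := by
    intro m
    have e2 : G m = Pq q (2 * (m : ℝ)) / Pq q (2 * (m : ℝ) - 2 * ν) / (1 - s) := rfl
    rw [e2]
    apply div_neg_of_pos_of_neg (div_pos (Pq_pos hq0 hq1 _) (Pq_pos hq0 hq1 _)) (by linarith)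
  have hrec : ∀ n : ℕ, G (-((n : ℤ) + 1)) =
      ((q ^ (2 * (n : ℝ) + 2) + 1) / (q ^ (2 * (n : ℝ) + 2) + s)) * G (-(n : ℤ)) := by
    intro n
    have e2 : G (-((n : ℤ) + 1)) =
        Pq q (2 * ((-((n : ℤ) + 1) : ℤ) : ℝ)) /
          Pq q (2 * ((-((n : ℤ) + 1) : ℤ) : ℝ) - 2 * ν) / (1 - s) := rfl
    have e3 : G (-(n : ℤ)) =
        Pq q (2 * ((-(n : ℤ) : ℤ) : ℝ)) / Pq q (2 * ((-(n : ℤ) : ℤ) : ℝ) - 2 * ν) / (1 - s) := rfl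
    rw [e2, e3,
      show (2 * ((-((n : ℤ) + 1) : ℤ) : ℝ)) = -(2 * (n : ℝ)) - 2 by push_cast; ring,
      show (2 * ((-(n : ℤ) : ℤ) : ℝ)) = -(2 * (n : ℝ)) by push_cast; ring]
    have p1 : Pq q (-(2 * (n : ℝ)) - 2) = (1 + q ^ (-(2 * (n : ℝ)) - 2)) * Pq q (-(2 * (n : ℝ))) := by
      have := Pq_peel hq0 hq1 (-(2 * (n : ℝ)) - 2)
      rwa [show (-(2 * (n : ℝ)) - 2 + 2) = -(2 * (n : ℝ)) by ring] at this
    have p2 : Pq q (-(2 * (n : ℝ)) - 2 - 2 * ν) =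
        (1 + q ^ (-(2 * (n : ℝ)) - 2 - 2 * ν)) * Pq q (-(2 * (n : ℝ)) - 2 * ν) := by
      have := Pq_peel hq0 hq1 (-(2 * (n : ℝ)) - 2 - 2 * ν)
      rwa [show (-(2 * (n : ℝ)) - 2 - 2 * ν + 2) = -(2 * (n : ℝ)) - 2 * ν by ring] at this
    rw [p1, p2]
    -- convert coefficients
    have hw : q ^ (-(2 * (n : ℝ)) - 2) = (q ^ (2 * (n : ℝ) + 2))⁻¹ := by
      rw [← Real.rpow_neg hq0.le]; ring_nf
    have hw2 : q ^ (-(2 * (n : ℝ)) - 2 - 2 * ν) = (q ^ (2 * (n : ℝ) + 2))⁻¹ * s := by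
      rw [hsdef, ← Real.rpow_neg hq0.le, ← Real.rpow_add hq0]; ring_nf
    rw [hw, hw2]
    have hwpos : 0 < q ^ (2 * (n : ℝ) + 2) := Real.rpow_pos_of_pos hq0 _
    have hP1 := Pq_pos hq0 hq1 (-(2 * (n : ℝ)))
    have hP2 := Pq_pos hq0 hq1 (-(2 * (n : ℝ)) - 2 * ν)
    set w := q ^ (2 * (n : ℝ) + 2) with hwdef
    have d1 : (0:ℝ) < 1 + w⁻¹ := by positivity
    have d2 : (0:ℝ) < 1 + w⁻¹ * s := by positivity
    have d3 : (0:ℝ) < w + s := by positivity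
    field_simp
  have hGbot : Tendsto (fun n : ℕ => G (-(n : ℤ))) atTop (𝓝 0) := by
    have hsumm : Summable (fun n : ℕ => G (-(n : ℤ))) := by
      apply summable_of_ratio_test_tendsto_lt_one (l := 1 / s)
        ((div_lt_one hs0).2 hs1)
        (Eventually.of_forall (fun n => (hGneg _).ne))
      have hco : ∀ n : ℕ, ‖G (-((n + 1 : ℕ) : ℤ))‖ / ‖G (-(n : ℤ))‖ =
          (q ^ (2 * (n : ℝ) + 2) + 1) / (q ^ (2 * (n : ℝ) + 2) + s) := by
        intro n
        have : ((-((n + 1 : ℕ) : ℤ)) : ℤ) = -((n : ℤ) + 1) := by push_cast; ring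
        rw [this, hrec n, norm_mul, Real.norm_of_nonneg
          (by positivity : (0:ℝ) ≤ (q ^ (2 * (n : ℝ) + 2) + 1) / (q ^ (2 * (n : ℝ) + 2) + s)),
          mul_div_assoc, div_self (by simpa using (hGneg (-(n : ℤ))).ne : ‖G (-(n : ℤ))‖ ≠ 0),
          mul_one]
      refine Tendsto.congr (fun n => (hco n).symm) ?_
      have hw := rpow_seq_tendsto hq0 hq1 2
      have := ((hw.add_const 1).div (hw.add_const s) (by positivity : (0:ℝ) + s ≠ 0))
      simp at this ⊢
      exact this
    simpa using hsumm.tendsto_atTop_zero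
  -- HasSum on nonnegative side
  have hA : HasSum (fun n : ℕ => f (n : ℤ)) (G 0 - 1 / (1 - s)) := by
    rw [hasSum_iff_tendsto_nat_of_nonneg (fun i => hf0 _)]
    have hps : ∀ n : ℕ, ∑ i ∈ Finset.range n, f (i : ℤ) = G 0 - G (n : ℤ) := by
      intro n
      have hsub := Finset.sum_range_sub' (fun i : ℕ => G (i : ℤ)) n
      simp only [Nat.cast_zero] at hsub
      rw [← hsub]
      refine Finset.sum_congr rfl (fun i _ => ?_)
      rw [htel (i : ℤ)]
      norm_num
    simp only [hps]
    exact tendsto_const_nhds.sub hGtop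
  -- HasSum on negative side
  have hB : HasSum (fun n : ℕ => f (-((n : ℤ) + 1))) (0 - G 0) := by
    rw [hasSum_iff_tendsto_nat_of_nonneg (fun i => hf0 _)]
    have hps : ∀ n : ℕ, ∑ i ∈ Finset.range n, f (-((i : ℤ) + 1)) = G (-(n : ℤ)) - G 0 := by
      intro n
      have hsub := Finset.sum_range_sub (fun i : ℕ => G (-(i : ℤ))) n
      simp only [Nat.cast_zero, neg_zero] at hsub
      rw [← hsub]
      refine Finset.sum_congr rfl (fun i _ => ?_)
      rw [htel (-((i : ℤ) + 1))]
      have h1 : (-((i : ℤ) + 1) + 1) = -(i : ℤ) := by ring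
      have h2 : (-(((i + 1 : ℕ) : ℤ))) = -((i : ℤ) + 1) := by push_cast; ring
      rw [h1, h2]
    simp only [hps]
    simpa using hGbot.sub (tendsto_const_nhds (x := G 0))
  have hsum : HasSum f ((G 0 - 1 / (1 - s)) + (0 - G 0)) := hA.of_nat_of_neg_add_one hB
  refine ⟨hsum.summable, ?_⟩
  rw [hsum.tsum_eq, show (G 0 - 1 / (1 - s)) + (0 - G 0) = -(1 / (1 - s)) by ring,
    mul_neg, mul_one_div, neg_div]
end

section
/- Let 0<q<1 and define for real ν the bilateral sum Q_ν = (1-q)·Σ_{m=-∞}^∞ 1/(q^{m-ν+1/2} + q^{-m+ν-1/2}). Then Q_ν converges for every ν, and lim_{q→1⁻} Q_ν = π/2. -/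
/-! With `h = -log q`, the `m`-th term is `f (h * (m - (ν - 1/2)))` for `f x = (2 cosh x)⁻¹`, so
`(1 - q) Q_ν` is `(1 - q) / h` times a Riemann sum of `f` with mesh `h`. As `f` is even, positive
and decreasing on `[0, ∞)` with antiderivative `arctan ∘ exp`, comparing each half of the sum with
the integral traps it within `O(h)` of `∫ f = π / 2`, while `(1 - q) / h → 1`. -/

open Filter Set Topology Real

lemma sub_mem_Icc_of_hasDerivAt_of_antitoneOn {f F : ℝ → ℝ} {a x y : ℝ}
    (hF : ∀ x, HasDerivAt F (f x) x) (hf : AntitoneOn f (Ici a)) (hax : a ≤ x) (hxy : x ≤ y) :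
    F y - F x ∈ Icc (f y * (y - x)) (f x * (y - x)) := by
  have hcont : ContinuousOn F (Icc x y) := fun z _ => (hF z).continuousAt.continuousWithinAt
  have hdiff : DifferentiableOn ℝ F (interior (Icc x y)) :=
    fun z _ => (hF z).differentiableAt.differentiableWithinAt
  constructor
  · refine (convex_Icc x y).mul_sub_le_image_sub_of_le_deriv hcont hdiff (fun z hz => ?_)
      x (left_mem_Icc.2 hxy) y (right_mem_Icc.2 hxy) hxy
    rw [interior_Icc] at hz
    rw [(hF z).deriv]
    exact hf (hax.trans hz.1.le) (hax.trans hxy) hz.2.le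
  · refine (convex_Icc x y).image_sub_le_mul_sub_of_deriv_le hcont hdiff (fun z hz => ?_)
      x (left_mem_Icc.2 hxy) y (right_mem_Icc.2 hxy) hxy
    rw [interior_Icc] at hz
    rw [(hF z).deriv]
    exact hf hax (hax.trans hz.1.le) hz.1.le

lemma Monotone.hasSum_succ_sub {u : ℕ → ℝ} {L : ℝ} (hu : Monotone u)
    (hL : Tendsto u atTop (𝓝 L)) : HasSum (fun n => u (n + 1) - u n) (L - u 0) := by
  rw [hasSum_iff_tendsto_nat_of_nonneg (fun n => sub_nonneg.2 (hu n.le_succ))]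
  simpa only [Finset.sum_range_sub] using hL.sub_const (u 0)

lemma riemann_sum_nat_bounds {f F : ℝ → ℝ} {L a h : ℝ} (hF : ∀ x, HasDerivAt F (f x) x)
    (hf0 : ∀ x, 0 ≤ f x) (hf : AntitoneOn f (Ici a)) (hL : Tendsto F atTop (𝓝 L)) (hh : 0 < h) :
    Summable (fun n : ℕ => f (a + n * h)) ∧
      L - F a ≤ h * ∑' n : ℕ, f (a + n * h) ∧
      h * ∑' n : ℕ, f (a + n * h) ≤ L - F a + h * f a := by
  set x : ℕ → ℝ := fun n => a + n * h
  have hx : ∀ n, x (n + 1) = x n + h := fun n => by simp only [x]; push_cast; ring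
  have hax : ∀ n, a ≤ x n := fun n => le_add_of_nonneg_right (by positivity)
  have step : ∀ n, F (x (n + 1)) - F (x n) ∈ Icc (h * f (x (n + 1))) (h * f (x n)) := fun n => by
    have := sub_mem_Icc_of_hasDerivAt_of_antitoneOn hF hf (hax n) (le_add_of_nonneg_right hh.le)
    rwa [add_sub_cancel_left, mul_comm (f _), mul_comm (f _), ← hx] at this
  have hFmono : Monotone F := monotone_of_hasDerivAt_nonneg hF hf0
  have htele : HasSum (fun n => F (x (n + 1)) - F (x n)) (L - F a) := by
    have hxmono : Monotone x := fun m n hmn => by simp only [x]; gcongr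
    have hxtop : Tendsto x atTop atTop :=
      tendsto_atTop_add_const_left _ _ (tendsto_natCast_atTop_atTop.atTop_mul_const hh)
    simpa [x] using (hFmono.comp hxmono).hasSum_succ_sub (hL.comp hxtop)
  have hsucc : Summable (fun n => h * f (x (n + 1))) :=
    htele.summable.of_nonneg_of_le (fun n => mul_nonneg hh.le (hf0 _)) (fun n => (step n).1)
  have hsum : Summable (fun n => f (x n)) :=
    (summable_nat_add_iff 1).1 ((summable_mul_left_iff hh.ne').1 hsucc)
  refine ⟨hsum, ?_, ?_⟩
  · rw [← tsum_mul_left]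
    exact hasSum_le (fun n => (step n).2) htele (hsum.mul_left h).hasSum
  · have hupper : h * ∑' n, f (x (n + 1)) ≤ L - F a := by
      rw [← tsum_mul_left]
      exact hasSum_le (fun n => (step n).1) hsucc.hasSum htele
    rw [hsum.tsum_eq_zero_add]
    simp only [x, Nat.cast_zero, zero_mul, add_zero] at hupper ⊢
    linarith

lemma hasSum_int_comp_mul_sub_of_even {f : ℝ → ℝ} (heven : ∀ x, f (-x) = f x) {h c s t : ℝ}
    (hs : HasSum (fun n : ℕ => f ((⌈c⌉ - c) * h + n * h)) s)
    (ht : HasSum (fun n : ℕ => f ((1 - (⌈c⌉ - c)) * h + n * h)) t) :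
    HasSum (fun m : ℤ => f (h * (m - c))) (s + t) := by
  rw [← (Equiv.addRight ⌈c⌉).hasSum_iff]
  refine HasSum.of_nat_of_neg_add_one ?_ ?_
  · convert hs using 2 with n
    simp only [Function.comp_apply, Equiv.coe_addRight, Int.cast_add, Int.cast_natCast]
    ring_nf
  · convert ht using 2 with n
    simp only [Function.comp_apply, Equiv.coe_addRight, Int.cast_add, Int.cast_neg,
      Int.cast_natCast, Int.cast_one]
    rw [← heven]
    ring_nf

lemma riemann_sum_int_bounds {f F : ℝ → ℝ} {L h : ℝ} (hF : ∀ x, HasDerivAt F (f x) x)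
    (hf0 : ∀ x, 0 ≤ f x) (hf : AntitoneOn f (Ici 0)) (heven : ∀ x, f (-x) = f x)
    (hL : Tendsto F atTop (𝓝 L)) (hh : 0 < h) (c : ℝ) :
    Summable (fun m : ℤ => f (h * (m - c))) ∧
      2 * (L - F h) ≤ h * ∑' m : ℤ, f (h * (m - c)) ∧
      h * ∑' m : ℤ, f (h * (m - c)) ≤ 2 * (L - F 0) + 2 * h * f 0 := by
  set d : ℝ := ⌈c⌉ - c
  have hd : d ∈ Icc 0 1 := ⟨sub_nonneg.2 (Int.le_ceil c), by linarith [Int.ceil_lt_add_one c]⟩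
  have hFmono : Monotone F := monotone_of_hasDerivAt_nonneg hF hf0
  have side : ∀ t ∈ Icc (0 : ℝ) 1, Summable (fun n : ℕ => f (t * h + n * h)) ∧
      L - F h ≤ h * ∑' n : ℕ, f (t * h + n * h) ∧
      h * ∑' n : ℕ, f (t * h + n * h) ≤ L - F 0 + h * f 0 := by
    intro t ht
    have hth : 0 ≤ t * h := mul_nonneg ht.1 hh.le
    obtain ⟨hsum, hlo, hhi⟩ :=
      riemann_sum_nat_bounds hF hf0 (hf.mono (Ici_subset_Ici.2 hth)) hL hh (a := t * h)
    refine ⟨hsum, ?_, ?_⟩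
    · linarith [hFmono (mul_le_of_le_one_left hh.le ht.2)]
    · have := hf self_mem_Ici hth hth
      nlinarith [hFmono hth]
  obtain ⟨hs, hslo, hshi⟩ := side d hd
  obtain ⟨ht, htlo, hthi⟩ := side (1 - d) ⟨by linarith [hd.2], by linarith [hd.1]⟩
  have hsplit := hasSum_int_comp_mul_sub_of_even heven hs.hasSum ht.hasSum
  refine ⟨hsplit.summable, ?_, ?_⟩ <;> rw [hsplit.tsum_eq, mul_add] <;> linarith

lemma tendsto_riemann_sum_int {f F : ℝ → ℝ} {L : ℝ} (hF : ∀ x, HasDerivAt F (f x) x)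
    (hf0 : ∀ x, 0 ≤ f x) (hf : AntitoneOn f (Ici 0)) (heven : ∀ x, f (-x) = f x)
    (hL : Tendsto F atTop (𝓝 L)) (c : ℝ) :
    Tendsto (fun h => h * ∑' m : ℤ, f (h * (m - c))) (𝓝[>] 0) (𝓝 (2 * (L - F 0))) := by
  have hF0 : Tendsto F (𝓝[>] 0) (𝓝 (F 0)) :=
    (hF 0).continuousAt.tendsto.mono_left nhdsWithin_le_nhds
  have hid : Tendsto (fun h : ℝ => h) (𝓝[>] 0) (𝓝 0) := nhdsWithin_le_nhds
  refine tendsto_of_tendsto_of_tendsto_of_le_of_le' (g := fun h => 2 * (L - F h))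
    (h := fun h => 2 * (L - F 0) + 2 * h * f 0) ?_ ?_ ?_ ?_
  · exact (hF0.const_sub L).const_mul 2
  · simpa using ((hid.const_mul 2).mul_const (f 0)).const_add (2 * (L - F 0))
  · filter_upwards [self_mem_nhdsWithin] with h hh
    exact (riemann_sum_int_bounds hF hf0 hf heven hL hh c).2.1
  · filter_upwards [self_mem_nhdsWithin] with h hh
    exact (riemann_sum_int_bounds hF hf0 hf heven hL hh c).2.2

lemma hasDerivAt_arctan_exp (x : ℝ) :
    HasDerivAt (fun x => arctan (exp x)) (2 * cosh x)⁻¹ x := by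
  refine ((hasDerivAt_arctan' (exp x)).comp x (hasDerivAt_exp x)).congr_deriv ?_
  rw [cosh_eq, exp_neg]
  field_simp
  ring

lemma tendsto_arctan_exp_atTop : Tendsto (fun x => arctan (exp x)) atTop (𝓝 (π / 2)) :=
  (tendsto_nhds_of_tendsto_nhdsWithin tendsto_arctan_atTop).comp tendsto_exp_atTop

lemma antitoneOn_inv_two_mul_cosh : AntitoneOn (fun x => (2 * cosh x)⁻¹) (Ici 0) := by
  intro x hx y hy hxy
  have : cosh x ≤ cosh y := cosh_le_cosh.2 (by rwa [abs_of_nonneg hx, abs_of_nonneg hy])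
  dsimp only
  gcongr

lemma summable_inv_two_mul_cosh {h : ℝ} (hh : 0 < h) (c : ℝ) :
    Summable (fun m : ℤ => (2 * cosh (h * (m - c)))⁻¹) :=
  (riemann_sum_int_bounds hasDerivAt_arctan_exp (fun x => by positivity)
    antitoneOn_inv_two_mul_cosh (fun x => by rw [cosh_neg]) tendsto_arctan_exp_atTop hh c).1

lemma tendsto_mul_tsum_inv_two_mul_cosh (c : ℝ) :
    Tendsto (fun h => h * ∑' m : ℤ, (2 * cosh (h * (m - c)))⁻¹) (𝓝[>] 0) (𝓝 (π / 2)) := by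
  have := tendsto_riemann_sum_int hasDerivAt_arctan_exp (fun x => by positivity)
    antitoneOn_inv_two_mul_cosh (fun x => by rw [cosh_neg]) tendsto_arctan_exp_atTop c
  rwa [exp_zero, arctan_one, show 2 * (π / 2 - π / 4) = π / 2 by ring] at this

lemma one_div_rpow_add_rpow_neg {q : ℝ} (hq : 0 < q) (t : ℝ) :
    1 / (q ^ t + q ^ (-t)) = (2 * cosh (-log q * t))⁻¹ := by
  rw [rpow_def_of_pos hq, rpow_def_of_pos hq, cosh_eq, one_div]
  ring_nf

lemma tendsto_neg_log_nhdsGT_zero :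
    Tendsto (fun q => -log q) (𝓝[Ioo 0 1] 1) (𝓝[>] 0) := by
  refine tendsto_nhdsWithin_iff.2 ⟨?_, ?_⟩
  · have hlog := (continuousAt_log one_ne_zero).neg.tendsto
    rw [Pi.neg_apply, log_one, neg_zero] at hlog
    exact hlog.mono_left nhdsWithin_le_nhds
  · filter_upwards [self_mem_nhdsWithin] with q hq
    exact neg_pos.2 (log_neg hq.1 hq.2)

lemma tendsto_one_sub_div_neg_log :
    Tendsto (fun q => (1 - q) / -log q) (𝓝[Ioo 0 1] 1) (𝓝 1) := by
  have hslope := (hasDerivAt_iff_tendsto_slope.1 (hasDerivAt_log one_ne_zero)).inv₀ (by norm_num)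
  rw [inv_inv] at hslope
  refine (hslope.mono_left (nhdsWithin_mono _ fun q hq => hq.2.ne)).congr' ?_
  filter_upwards [self_mem_nhdsWithin] with q hq
  rw [slope_def_field, log_one, sub_zero, inv_div, ← neg_div_neg_eq, neg_sub]

theorem stmt18 (ν : ℝ) :
    (∀ q : ℝ, 0 < q → q < 1 →
      Summable fun m : ℤ =>
        1 / (q ^ ((m : ℝ) - ν + 1 / 2) + q ^ (-(m : ℝ) + ν - 1 / 2))) ∧
    Filter.Tendsto
      (fun q : ℝ =>
        (1 - q) * ∑' m : ℤ,
          1 / (q ^ ((m : ℝ) - ν + 1 / 2) + q ^ (-(m : ℝ) + ν - 1 / 2)))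
      (nhdsWithin 1 (Set.Ioo (0 : ℝ) 1)) (nhds (Real.pi / 2)) := by
  have hterm : ∀ q : ℝ, 0 < q → ∀ m : ℤ,
      1 / (q ^ ((m : ℝ) - ν + 1 / 2) + q ^ (-(m : ℝ) + ν - 1 / 2)) =
        (2 * cosh (-log q * (m - (ν - 1 / 2))))⁻¹ := fun q hq m => by
    rw [← one_div_rpow_add_rpow_neg hq]
    ring_nf
  refine ⟨fun q hq0 hq1 => ?_, ?_⟩
  · simp_rw [hterm q hq0]
    exact summable_inv_two_mul_cosh (neg_pos.2 (log_neg hq0 hq1)) _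
  · have := tendsto_one_sub_div_neg_log.mul
      ((tendsto_mul_tsum_inv_two_mul_cosh (ν - 1 / 2)).comp tendsto_neg_log_nhdsGT_zero)
    rw [one_mul] at this
    refine this.congr' ?_
    filter_upwards [self_mem_nhdsWithin] with q hq
    simp_rw [Function.comp_apply, hterm q hq.1]
    rw [← mul_assoc, div_mul_cancel₀ _ (neg_pos.2 (log_neg hq.1 hq.2)).ne']
end
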